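/- Let α > 0 and σ ≥ 0 be real with α > 2σ², and set ω* := √(α(α−2σ²)). Then for every integer ℓ with |ℓ| ≠ 1, one has iω*ℓ + α − √(2α)·√(iω*ℓ + σ²) ≠ 0 (principal square root). Consequently, if v ∈ L² of the circle ℝ/2πℤ (complex-valued) satisfies (iω*ℓ + α − √(2α)·√(iω*ℓ + σ²))·(fourier coefficient of v at ℓ) = 0 for every ℓ ∈ ℤ, then all Fourier coefficients of v with index |ℓ| ≠ 1 vanish, i.e. v(s) = c₁e^{is} + c₂e^{−is} almost everywhere for some c₁, c₂ ∈ ℂ. -/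

import Mathlib

open MeasureTheory

/-- Principal complex square root: branch cut along `(-∞,0]`, `Re (csqrt z) ≥ 0`. -/
noncomputable def csqrt (z : ℂ) : ℂ := z ^ (1/2 : ℂ)

instance : Fact (0 < 2 * Real.pi) := ⟨by positivity⟩

/-!
If `𝕕(iωℓ) = 0` then `iωℓ + α = √(2α) √(iωℓ + σ²)`, and squaring (which is legitimate for any
branch of the square root) gives `(iωℓ + α)² = 2α (iωℓ + σ²)`. Its real part reads
`α² - ω²ℓ² = 2ασ²`, i.e. `ω²ℓ² = α(α - 2σ²) = ω²`, so `ℓ² = 1`. Hence multiplication by the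
symbol kills every Fourier coefficient of index `|ℓ| ≠ 1`, and an `L²` function whose Fourier
series is supported on `{1, -1}` agrees a.e. with that trigonometric polynomial.
-/

lemma csqrt_sq (z : ℂ) : csqrt z ^ 2 = z := by
  rw [csqrt, one_div]
  exact Complex.cpow_ofNat_inv_pow z 2

/-- The symbol `𝕕(z; 0, σ)` of the linearized boundary-integral equation. -/
noncomputable def symbol (α σ : ℝ) (z : ℂ) : ℂ :=
  z + α - Real.sqrt (2 * α) * csqrt (z + (σ : ℂ) ^ 2)

lemma sq_add_eq_of_symbol_eq_zero {α σ : ℝ} (hα : 0 ≤ α) {z : ℂ} (h : symbol α σ z = 0) :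
    (z + α) ^ 2 = 2 * α * (z + (σ : ℂ) ^ 2) := by
  have hz : z + α = Real.sqrt (2 * α) * csqrt (z + (σ : ℂ) ^ 2) := by
    rw [symbol] at h
    linear_combination h
  rw [hz, mul_pow, csqrt_sq, ← Complex.ofReal_pow, Real.sq_sqrt (by positivity)]
  push_cast
  ring

lemma sq_eq_one_of_symbol_I_mul_eq_zero {α σ ω x : ℝ} (hα : 0 ≤ α)
    (hω : ω ^ 2 = α * (α - 2 * σ ^ 2)) (hω0 : ω ≠ 0)
    (h : symbol α σ (Complex.I * (ω * x)) = 0) : x ^ 2 = 1 := by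
  have hre := congrArg Complex.re (sq_add_eq_of_symbol_eq_zero hα h)
  simp only [sq, Complex.add_re, Complex.mul_re, Complex.mul_im, Complex.add_im,
    Complex.I_re, Complex.I_im, Complex.ofReal_re, Complex.ofReal_im, Complex.re_ofNat,
    Complex.im_ofNat] at hre
  have hprod : ω ^ 2 * (x ^ 2 - 1) = 0 := by linear_combination -hre - hω
  have := (mul_eq_zero.mp hprod).resolve_left (pow_ne_zero 2 hω0)
  linarith

lemma symbol_ne_zero_of_abs_ne_one {α σ : ℝ} (hα : 0 < α) (h2 : 2 * σ ^ 2 < α) {ℓ : ℤ}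
    (hℓ : |ℓ| ≠ 1) :
    symbol α σ (Complex.I * (Real.sqrt (α * (α - 2 * σ ^ 2)) * ℓ)) ≠ 0 := by
  have hpos : 0 < α * (α - 2 * σ ^ 2) := mul_pos hα (by linarith)
  intro h
  have hℓ2 := sq_eq_one_of_symbol_I_mul_eq_zero hα.le (Real.sq_sqrt hpos.le)
    (Real.sqrt_pos.mpr hpos).ne' h
  exact hℓ <| (abs_eq zero_le_one).mpr <| sq_eq_one_iff.mp <| by exact_mod_cast hℓ2

lemma MeasureTheory.MemLp.ae_eq_sum_fourier_of_fourierCoeff_eq_zero {T : ℝ} [Fact (0 < T)]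
    {v : AddCircle T → ℂ} (hv : MemLp v 2 AddCircle.haarAddCircle) {s : Finset ℤ}
    (hs : ∀ n ∉ s, fourierCoeff v n = 0) :
    v =ᵐ[AddCircle.haarAddCircle] fun x => ∑ n ∈ s, fourierCoeff v n * fourier n x := by
  have hcoeff : fourierCoeff (hv.toLp v) = fourierCoeff v :=
    fourierCoeff_congr_ae hv.coeFn_toLp
  have hsum := hasSum_fourier_series_L2 (hv.toLp v)
  rw [hcoeff] at hsum
  have htoLp : hv.toLp v = ∑ n ∈ s, fourierCoeff v n • fourierLp 2 n :=
    hsum.unique (hasSum_sum_of_ne_finset_zero fun n hn => by simp [hs n hn])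
  have hterms : ∀ᵐ x ∂AddCircle.haarAddCircle, ∀ n : ℤ,
      (fourierCoeff v n • fourierLp 2 n : Lp ℂ 2 _) x = fourierCoeff v n * fourier n x :=
    ae_all_iff.mpr fun n => by
      filter_upwards [Lp.coeFn_smul (fourierCoeff v n) (fourierLp (T := T) 2 n),
        coeFn_fourierLp (T := T) 2 n] with x hsmul hfourier
      rw [hsmul, Pi.smul_apply, hfourier, smul_eq_mul]
  filter_upwards [hv.coeFn_toLp,
    Lp.coeFn_fun_finsetSum s fun n => fourierCoeff v n • fourierLp 2 n, hterms]
    with x hx hsumx hterm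
  rw [← hx, htoLp, hsumx]
  exact Finset.sum_congr rfl fun n _ => hterm n

theorem stmt_9_general (α σ : ℝ) (hα : 0 < α) (h2 : 2*σ^2 < α) :
    (∀ ℓ : ℤ, |ℓ| ≠ 1 →
      Complex.I * (Real.sqrt (α*(α - 2*σ^2)) * ℓ) + α
        - Real.sqrt (2*α) * csqrt (Complex.I * (Real.sqrt (α*(α - 2*σ^2)) * ℓ) + (σ:ℂ)^2) ≠ 0) ∧
    (∀ v : AddCircle (2 * Real.pi) → ℂ,
      MemLp v 2 AddCircle.haarAddCircle →
      (∀ ℓ : ℤ,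
        (Complex.I * (Real.sqrt (α*(α - 2*σ^2)) * ℓ) + α
          - Real.sqrt (2*α) * csqrt (Complex.I * (Real.sqrt (α*(α - 2*σ^2)) * ℓ) + (σ:ℂ)^2))
          * fourierCoeff v ℓ = 0) →
      ∃ c₁ c₂ : ℂ, ∀ᵐ s ∂(AddCircle.haarAddCircle),
        v s = c₁ * fourier 1 s + c₂ * fourier (-1) s) := by
  have hsymbol := fun ℓ (hℓ : |ℓ| ≠ 1) => symbol_ne_zero_of_abs_ne_one hα h2 hℓ
  refine ⟨hsymbol, fun v hv hker => ⟨fourierCoeff v 1, fourierCoeff v (-1), ?_⟩⟩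
  have hcoeff : ∀ n ∉ ({1, -1} : Finset ℤ), fourierCoeff v n = 0 := fun n hn =>
    (mul_eq_zero.mp (hker n)).resolve_left <| hsymbol n <| by
      simpa [abs_eq zero_le_one, not_or] using hn
  filter_upwards [hv.ae_eq_sum_fourier_of_fourierCoeff_eq_zero hcoeff] with s hs
  rw [hs, Finset.sum_pair (by decide)]

/-- For `α > 2σ² ≥ 0`, `ω* = √(α(α−2σ²))`: for every integer `ℓ`
with `|ℓ| ≠ 1` one has `𝕕(iω*ℓ;0,σ) = iω*ℓ + α − √(2α)√(iω*ℓ+σ²) ≠ 0`. Consequently,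
if `v ∈ L²` of the circle satisfies `𝕕(iω*ℓ;0,σ)·(fourierCoeff v ℓ) = 0` for all
`ℓ ∈ ℤ`, then `v(s) = c₁e^{is} + c₂e^{−is}` almost everywhere for some `c₁, c₂ ∈ ℂ`. -/
theorem stmt_9 (α σ : ℝ) (hα : 0 < α) (hσ : 0 ≤ σ) (h2 : 2*σ^2 < α) :
    (∀ ℓ : ℤ, |ℓ| ≠ 1 →
      Complex.I * (Real.sqrt (α*(α - 2*σ^2)) * ℓ) + α
        - Real.sqrt (2*α) * csqrt (Complex.I * (Real.sqrt (α*(α - 2*σ^2)) * ℓ) + (σ:ℂ)^2) ≠ 0) ∧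
    (∀ v : AddCircle (2 * Real.pi) → ℂ,
      MemLp v 2 AddCircle.haarAddCircle →
      (∀ ℓ : ℤ,
        (Complex.I * (Real.sqrt (α*(α - 2*σ^2)) * ℓ) + α
          - Real.sqrt (2*α) * csqrt (Complex.I * (Real.sqrt (α*(α - 2*σ^2)) * ℓ) + (σ:ℂ)^2))
          * fourierCoeff v ℓ = 0) →
      ∃ c₁ c₂ : ℂ, ∀ᵐ s ∂(AddCircle.haarAddCircle),
        v s = c₁ * fourier 1 s + c₂ * fourier (-1) s) :=
  stmt_9_general α σ hα h2
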